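/- arXiv:1706.05672 — 9 statements merged into one kernel-verified Lean document; each statement's English description precedes it below -/
import Mathlib

section
/- For every integer M > 3, the number of elements of the interior honeycomb point set H̃_M equals (M² − 3M)/3 if M ≡ 0 (mod 3), and (M² − 3M + 2)/3 otherwise. -/
/-!
Induct on `M`. The points of `H̃_{M+1}` with `s0 > 1` are those of `H̃_M` with `s0` raised
by one, while those on the edge `s0 = 1` are determined by `s1 + 2 s2 = M + s2`, which runs
through the integers in `(M, 2M)` not divisible by `3`. Counting the multiples of `3` by floor
division, the quantity `3 |H̃_M| + 3M + 2 [3 ∣ M]` grows by `2M + 1`, so it equals `M² + 2`.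
-/

open Finset

/-- The point set `F_{P,M}`: triples of nonnegative integers summing to `M`. -/
def FPM (M : ℕ) : Finset (ℕ × ℕ × ℕ) :=
  (Finset.range (M+1) ×ˢ Finset.range (M+1) ×ˢ Finset.range (M+1)).filter
    (fun s => s.1 + s.2.1 + s.2.2 = M)

/-- The point set `F_{Q,M}`: triples of `F_{P,M}` with `s1 + 2 s2 ≡ 0 (mod 3)`. -/
def FQM (M : ℕ) : Finset (ℕ × ℕ × ℕ) :=
  (FPM M).filter (fun s => (s.2.1 + 2 * s.2.2) % 3 = 0)

/-- The honeycomb point set `H_M = F_{P,M} \ F_{Q,M}`. -/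
def HM (M : ℕ) : Finset (ℕ × ℕ × ℕ) := FPM M \ FQM M

/-- The interior point set `F̃_{P,M}`: triples of strictly positive integers summing to `M`. -/
def FPMint (M : ℕ) : Finset (ℕ × ℕ × ℕ) :=
  (FPM M).filter (fun s => 0 < s.1 ∧ 0 < s.2.1 ∧ 0 < s.2.2)

/-- The interior point set `F̃_{Q,M}`. -/
def FQMint (M : ℕ) : Finset (ℕ × ℕ × ℕ) :=
  (FPMint M).filter (fun s => (s.2.1 + 2 * s.2.2) % 3 = 0)

/-- The interior honeycomb point set `H̃_M = F̃_{P,M} \ F̃_{Q,M}`. -/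
def HMint (M : ℕ) : Finset (ℕ × ℕ × ℕ) := FPMint M \ FQMint M

/-- The weight set `L_M ⊆ Λ_{Q,M}`. -/
def LM (M : ℕ) : Finset (ℕ × ℕ × ℕ) :=
  (FPM M).filter (fun l => (l.2.1 < l.1 ∧ l.2.2 < l.1) ∨ (l.1 = l.2.1 ∧ l.2.2 < l.1))

/-- The interior weight set `L̃_M`: elements of `L_M` with all coordinates positive. -/
def LMint (M : ℕ) : Finset (ℕ × ℕ × ℕ) :=
  (LM M).filter (fun l => 0 < l.1 ∧ 0 < l.2.1 ∧ 0 < l.2.2)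

/-- A triple `s ∈ F_{P,M}` is identified with the point `(s1/M, s2/M)`. -/
noncomputable def pt (M : ℕ) (s : ℕ × ℕ × ℕ) : ℝ × ℝ :=
  ((s.2.1 : ℝ) / M, (s.2.2 : ℝ) / M)

/-- The Weyl group orbit of the weight `λ` (ordered list, in `ω`-coordinates). -/
def orbit (l : ℕ × ℕ × ℕ) : List (ℤ × ℤ) :=
  [(2*(l.2.1:ℤ)+l.2.2, (l.2.1:ℤ)+2*l.2.2),
   (-(l.2.1:ℤ)+l.2.2, (l.2.1:ℤ)+2*l.2.2),
   (-(l.2.1:ℤ)-2*l.2.2, (l.2.1:ℤ)-l.2.2),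
   (-(l.2.1:ℤ)-2*l.2.2, -2*(l.2.1:ℤ)-l.2.2),
   (-(l.2.1:ℤ)+l.2.2, -2*(l.2.1:ℤ)-l.2.2),
   (2*(l.2.1:ℤ)+l.2.2, (l.2.1:ℤ)-l.2.2)]

/-- The signs `(+,−,+,−,+,−)` attached to the six orbit points for `S`-functions. -/
def orbitSigns : List ℤ := [1, -1, 1, -1, 1, -1]

/-- The Weyl orbit `C`-function `Φ_λ` of `A₂`. -/
noncomputable def PhiC (l : ℕ × ℕ × ℕ) (x : ℝ × ℝ) : ℂ :=
  ((orbit l).map (fun p =>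
    Complex.exp (2 * Real.pi * Complex.I / 3 * ((p.1 : ℂ) * (x.1 : ℂ) + (p.2 : ℂ) * (x.2 : ℂ))))).sum

/-- The Weyl orbit `S`-function `φ_λ` of `A₂`. -/
noncomputable def PhiS (l : ℕ × ℕ × ℕ) (x : ℝ × ℝ) : ℂ :=
  ((orbitSigns.zip (orbit l)).map (fun p => (p.1 : ℂ) *
    Complex.exp (2 * Real.pi * Complex.I / 3 * ((p.2.1 : ℂ) * (x.1 : ℂ) + (p.2.2 : ℂ) * (x.2 : ℂ))))).sum

/-- The Hartley kernel `cas t = cos t + sin t`. -/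
noncomputable def cas (t : ℝ) : ℝ := Real.cos t + Real.sin t

/-- The Hartley `C`-function `ζ¹_λ` of `A₂`. -/
noncomputable def zetaC (l : ℕ × ℕ × ℕ) (x : ℝ × ℝ) : ℝ :=
  ((orbit l).map (fun p => cas (2 * Real.pi / 3 * ((p.1 : ℝ) * x.1 + (p.2 : ℝ) * x.2)))).sum

/-- The Hartley `S`-function `ζ^e_λ` of `A₂`. -/
noncomputable def zetaS (l : ℕ × ℕ × ℕ) (x : ℝ × ℝ) : ℝ :=
  ((orbitSigns.zip (orbit l)).map (fun p => (p.1 : ℝ) *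
    cas (2 * Real.pi / 3 * ((p.2.1 : ℝ) * x.1 + (p.2.2 : ℝ) * x.2)))).sum

/-- The number of zero entries of a triple. -/
def zeroCount (s : ℕ × ℕ × ℕ) : ℕ :=
  (if s.1 = 0 then 1 else 0) + (if s.2.1 = 0 then 1 else 0) + (if s.2.2 = 0 then 1 else 0)

/-- The discrete function `ε`: values `6, 3, 1` for zero, one, two zero entries. -/
def epsF (s : ℕ × ℕ × ℕ) : ℕ :=
  if zeroCount s = 0 then 6 else if zeroCount s = 1 then 3 else 1

/-- The discrete function `h_M`: values `1, 2, 6` for zero, one, two zero entries. -/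
def hMF (l : ℕ × ℕ × ℕ) : ℕ :=
  if zeroCount l = 0 then 1 else if zeroCount l = 1 then 2 else 6

/-- The elements `γ₀ = id`, `γ₁`, `γ₂` of `Γ_M` acting as cyclic permutations of Kac
coordinates: `γ₁[λ0,λ1,λ2] = [λ2,λ0,λ1]`, `γ₂[λ0,λ1,λ2] = [λ1,λ2,λ0]`. -/
def gam (k : Fin 3) (l : ℕ × ℕ × ℕ) : ℕ × ℕ × ℕ :=
  if k = 0 then l else if k = 1 then (l.2.2, l.1, l.2.1) else (l.2.1, l.2.2, l.1)

/-- The normalization function `μ` of a triple of extension coefficients. -/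
noncomputable def muNorm (a b c : ℂ) : ℝ :=
  ‖a‖ ^ 2 + ‖b‖ ^ 2 + ‖c‖ ^ 2
    - (a * starRingEnd ℂ b + a * starRingEnd ℂ c + b * starRingEnd ℂ c).re

/-- The intertwining function `β` of two triples of extension coefficients. -/
noncomputable def betaFun (a b c a' b' c' : ℂ) : ℂ :=
  2 * (a * starRingEnd ℂ a' + b * starRingEnd ℂ b' + c * starRingEnd ℂ c')
    - a * (starRingEnd ℂ b' + starRingEnd ℂ c')
    - b * (starRingEnd ℂ a' + starRingEnd ℂ c')
    - c * (starRingEnd ℂ a' + starRingEnd ℂ b')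

/-- The extended `C`-function `Φ^t_λ` with extension coefficients `μ0, μ1, μ2`. -/
noncomputable def PhiCExt (μ0 μ1 μ2 : ℂ) (l : ℕ × ℕ × ℕ) (x : ℝ × ℝ) : ℂ :=
  μ0 * PhiC l x + μ1 * PhiC (gam 1 l) x + μ2 * PhiC (gam 2 l) x

/-- The extended `S`-function `φ^t_λ` with extension coefficients `μ0, μ1, μ2`. -/
noncomputable def PhiSExt (μ0 μ1 μ2 : ℂ) (l : ℕ × ℕ × ℕ) (x : ℝ × ℝ) : ℂ :=
  μ0 * PhiS l x + μ1 * PhiS (gam 1 l) x + μ2 * PhiS (gam 2 l) x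

/-- The extended Hartley `C`-function `ζ^{1,t}_λ` with extension coefficients `μ0, μ1, μ2`. -/
noncomputable def zetaCExt (μ0 μ1 μ2 : ℂ) (l : ℕ × ℕ × ℕ) (x : ℝ × ℝ) : ℂ :=
  μ0 * (zetaC l x : ℂ) + μ1 * (zetaC (gam 1 l) x : ℂ) + μ2 * (zetaC (gam 2 l) x : ℂ)

/-- The extended Hartley `S`-function `ζ^{e,t}_λ` with extension coefficients `μ0, μ1, μ2`. -/
noncomputable def zetaSExt (μ0 μ1 μ2 : ℂ) (l : ℕ × ℕ × ℕ) (x : ℝ × ℝ) : ℂ :=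
  μ0 * (zetaS l x : ℂ) + μ1 * (zetaS (gam 1 l) x : ℂ) + μ2 * (zetaS (gam 2 l) x : ℂ)

lemma mem_HMint {M : ℕ} {s : ℕ × ℕ × ℕ} :
    s ∈ HMint M ↔ s.1 + s.2.1 + s.2.2 = M ∧ 0 < s.1 ∧ 0 < s.2.1 ∧ 0 < s.2.2 ∧
      ¬ 3 ∣ s.2.1 + 2 * s.2.2 := by
  simp only [HMint, FQMint, FPMint, FPM, mem_sdiff, mem_filter, mem_product, mem_range,
    Nat.dvd_iff_mod_eq_zero]
  omega

lemma Nat.card_Ioc_filter_dvd {a b : ℕ} (p : ℕ) (hab : a ≤ b) :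
    #{x ∈ Ioc a b | p ∣ x} = b / p - a / p := by
  have hsplit : Ioc 0 b = Ioc 0 a ∪ Ioc a b := (Ioc_union_Ioc_eq_Ioc a.zero_le hab).symm
  have hdisj : Disjoint (Ioc 0 a) (Ioc a b) := Ioc_disjoint_Ioc_of_le le_rfl
  have hcard := Nat.Ioc_filter_dvd_card_eq_div b p
  rw [hsplit, filter_union, card_union_of_disjoint (disjoint_filter_filter hdisj),
    Nat.Ioc_filter_dvd_card_eq_div] at hcard
  omega

lemma Nat.card_Ioc_filter_not_dvd {a b : ℕ} (p : ℕ) (hab : a ≤ b) :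
    #{x ∈ Ioc a b | ¬ p ∣ x} = (b - a) - (b / p - a / p) := by
  have hsum := card_filter_add_card_filter_not (s := Ioc a b) (p ∣ ·)
  rw [Nat.card_Ioc_filter_dvd p hab, Nat.card_Ioc] at hsum
  omega

lemma card_HMint_succ_filter_fst_ne_one (M : ℕ) :
    #{s ∈ HMint (M + 1) | s.1 ≠ 1} = #(HMint M) := by
  apply card_nbij' (fun s => (s.1 - 1, s.2)) (fun s => (s.1 + 1, s.2))
  · intro s hs
    simp only [mem_coe, mem_filter, mem_HMint] at hs
    simp only [mem_coe, mem_HMint]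
    omega
  · intro s hs
    simp only [mem_coe, mem_HMint] at hs
    simp only [mem_coe, mem_filter, mem_HMint]
    omega
  · rintro ⟨s0, s'⟩ hs
    simp only [mem_coe, mem_filter, mem_HMint] at hs
    simp only [Prod.mk.injEq, and_true]
    omega
  · intro s _
    simp

lemma card_HMint_succ_filter_fst_eq_one (M : ℕ) :
    #{s ∈ HMint (M + 1) | s.1 = 1} = #{y ∈ Ioc M (2 * M - 1) | ¬ 3 ∣ y} := by
  apply card_nbij' (fun s => s.2.1 + 2 * s.2.2) (fun y => (1, 2 * M - y, y - M))
  · intro s hs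
    simp only [mem_coe, mem_filter, mem_HMint] at hs
    simp only [mem_coe, mem_filter, mem_Ioc]
    omega
  · intro y hy
    simp only [mem_coe, mem_filter, mem_Ioc] at hy
    simp only [mem_coe, mem_filter, mem_HMint]
    refine ⟨⟨by omega, by omega, by omega, by omega, ?_⟩, trivial⟩
    rw [show 2 * M - y + 2 * (y - M) = y by omega]
    exact hy.2
  · rintro ⟨s0, s1, s2⟩ hs
    simp only [mem_coe, mem_filter, mem_HMint] at hs
    simp only [Prod.mk.injEq]
    omega
  · intro y hy
    simp only [mem_coe, mem_filter, mem_Ioc] at hy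
    dsimp only
    omega

lemma card_HMint_succ (M : ℕ) :
    #(HMint (M + 1)) = #(HMint M) + ((M - 1) - ((2 * M - 1) / 3 - M / 3)) := by
  rw [← card_filter_add_card_filter_not (fun s => s.1 = 1),
    card_HMint_succ_filter_fst_eq_one, card_HMint_succ_filter_fst_ne_one,
    Nat.card_Ioc_filter_not_dvd 3 (by omega)]
  omega

lemma three_mul_card_HMint (M : ℕ) :
    3 * #(HMint M) + 3 * M + (if M % 3 = 0 then 2 else 0) = M ^ 2 + 2 := by
  induction M with
  | zero => rfl
  | succ M ih =>
    rw [card_HMint_succ, show (M + 1) ^ 2 = M ^ 2 + 2 * M + 1 by ring]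
    split_ifs at ih ⊢ <;> omega

theorem card_HMint_general (M : ℕ) :
    ((HMint M).card : ℚ) =
      if M % 3 = 0 then ((M : ℚ)^2 - 3*M) / 3 else ((M : ℚ)^2 - 3*M + 2) / 3 := by
  have h := three_mul_card_HMint M
  split_ifs at h ⊢
  · have hq : (3 * #(HMint M) + 3 * M + 2 : ℚ) = M ^ 2 + 2 := by exact_mod_cast h
    linarith
  · have hq : (3 * #(HMint M) + 3 * M : ℚ) = M ^ 2 + 2 := by exact_mod_cast h
    linarith

/-- counting formula for the interior honeycomb point set `H̃_M`. -/
theorem card_HMint (M : ℕ) (hM : 3 < M) :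
    ((HMint M).card : ℚ) =
      if M % 3 = 0 then ((M : ℚ)^2 - 3*M) / 3 else ((M : ℚ)^2 - 3*M + 2) / 3 :=
  card_HMint_general M
end

section
/- For every integer M ≥ 1, the number of elements of the weight set L_M equals (M² + 3M)/6 if M ≡ 0 (mod 3), and (M² + 3M + 2)/6 otherwise; consequently 2·|L_M| = |H_M|, where H_M is the honeycomb point set. -/
open Finset

/-! The interior of the simplex `s0 + s1 + s2 = M + 3` is the translate by `(1,1,1)` of the
simplex of size `M`, and both the inequalities defining `L` and the congruence
`s1 + 2 s2 ≡ 0 (mod 3)` are invariant under this translation. So each count grows by its value on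
the boundary of the simplex of size `M + 3`: `M + 3` points of `L`, and `2(M + 3)` honeycomb
points, since walking around the boundary the residue of `s1 + 2 s2` runs through `3(M + 3)`
consecutive values. Induction in steps of three from `M ≤ 2` gives both formulas. -/

@[simps]
def shiftTriple : ℕ × ℕ × ℕ ↪ ℕ × ℕ × ℕ where
  toFun s := (s.1 + 1, s.2.1 + 1, s.2.2 + 1)
  inj' := by
    rintro ⟨a, b, c⟩ ⟨a', b', c'⟩ h
    simp only [Prod.mk.injEq, Nat.add_right_cancel_iff] at h
    simp [h]

def boundaryFPM (M : ℕ) : Finset (ℕ × ℕ × ℕ) :=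
  (FPM M).filter fun s => ¬(0 < s.1 ∧ 0 < s.2.1 ∧ 0 < s.2.2)

lemma mem_FPM {M : ℕ} {s : ℕ × ℕ × ℕ} : s ∈ FPM M ↔ s.1 + s.2.1 + s.2.2 = M := by
  simp only [FPM, mem_filter, mem_product, mem_range]
  omega

lemma mem_boundaryFPM {M : ℕ} {s : ℕ × ℕ × ℕ} :
    s ∈ boundaryFPM M ↔ s.1 + s.2.1 + s.2.2 = M ∧ (s.1 = 0 ∨ s.2.1 = 0 ∨ s.2.2 = 0) := by
  simp only [boundaryFPM, mem_filter, mem_FPM]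
  omega

lemma filter_pos_FPM_add_three (M : ℕ) :
    (FPM (M + 3)).filter (fun s => 0 < s.1 ∧ 0 < s.2.1 ∧ 0 < s.2.2) =
      (FPM M).map shiftTriple := by
  ext ⟨a, b, c⟩
  simp only [mem_filter, mem_map, mem_FPM, shiftTriple_apply, Prod.exists, Prod.mk.injEq]
  constructor
  · rintro ⟨h, ha, hb, hc⟩
    exact ⟨a - 1, b - 1, c - 1, by omega, by omega, by omega, by omega⟩
  · rintro ⟨x, y, z, h, rfl, rfl, rfl⟩
    omega

lemma card_filter_FPM_add_three (p : ℕ × ℕ × ℕ → Prop) [DecidablePred p]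
    (hp : ∀ s, p (shiftTriple s) ↔ p s) (M : ℕ) :
    #((FPM (M + 3)).filter p) = #((FPM M).filter p) + #((boundaryFPM (M + 3)).filter p) := by
  rw [← card_filter_add_card_filter_not (p := fun s => 0 < s.1 ∧ 0 < s.2.1 ∧ 0 < s.2.2),
    filter_comm, filter_pos_FPM_add_three, filter_map, card_map, boundaryFPM, filter_comm]
  congr 3
  exact funext fun s => propext (hp s)

lemma card_LM_boundary (M : ℕ) :
    #((boundaryFPM M).filter fun l =>
      (l.2.1 < l.1 ∧ l.2.2 < l.1) ∨ (l.1 = l.2.1 ∧ l.2.2 < l.1)) = M := by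
  -- the boundary points of `L_M` are `(M-k, k, 0)` with `2k ≤ M` and `(k, 0, M-k)` with `2k > M`
  refine (card_nbij' (t := range M) (fun s => if s.2.2 = 0 then s.2.1 else M - s.2.2)
    (fun k => if 2 * k ≤ M then (M - k, k, 0) else (k, 0, M - k)) ?_ ?_ ?_ ?_).trans
      (card_range M)
  · rintro ⟨a, b, c⟩ h
    simp only [mem_coe, mem_filter, mem_boundaryFPM] at h
    simp only [mem_coe, mem_range]
    split_ifs <;> omega
  · intro k hk
    simp only [mem_coe, mem_range] at hk
    dsimp only
    split_ifs <;>
      simp only [mem_coe, mem_filter, mem_boundaryFPM, or_true, true_or, and_true] <;> omega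
  · rintro ⟨a, b, c⟩ h
    simp only [mem_coe, mem_filter, mem_boundaryFPM] at h
    dsimp only
    split_ifs <;> simp only [Prod.mk.injEq, true_and] <;> omega
  · intro k hk
    simp only [mem_coe, mem_range] at hk
    dsimp only
    split_ifs <;> simp_all <;> omega

/-- The boundary of `F_{P,M}` walked once around from `(M,0,0)`; each step raises `s1 + 2 s2`
by one modulo 3, so the `k`-th point has `s1 + 2 s2 ≡ k`. -/
def boundaryWalk (M k : ℕ) : ℕ × ℕ × ℕ :=
  if k < M then (M - k, k, 0) else if k < 2 * M then (0, 2 * M - k, k - M)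
  else (k - 2 * M, 0, 3 * M - k)

lemma card_filter_range_mod_three_ne_zero (M : ℕ) :
    #((range (3 * M)).filter fun k => k % 3 ≠ 0) = 2 * M := by
  induction M with
  | zero => rfl
  | succ M ih =>
    rw [show 3 * (M + 1) = 3 * M + 2 + 1 by ring, range_add_one, range_add_one, range_add_one,
      filter_insert, filter_insert, filter_insert, if_pos (by omega), if_pos (by omega),
      if_neg (by omega), card_insert_of_notMem (by simp), card_insert_of_notMem (by simp), ih]
    ring

lemma card_HM_boundary (M : ℕ) :
    #((boundaryFPM M).filter fun s => ¬(s.2.1 + 2 * s.2.2) % 3 = 0) = 2 * M := by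
  refine (card_nbij' (t := (range (3 * M)).filter fun k => k % 3 ≠ 0)
    (fun s => if s.2.2 = 0 then s.2.1 else if s.1 = 0 then M + s.2.2 else 3 * M - s.2.2)
    (boundaryWalk M) ?_ ?_ ?_ ?_).trans (card_filter_range_mod_three_ne_zero M)
  · rintro ⟨a, b, c⟩ h
    simp only [mem_coe, mem_filter, mem_boundaryFPM] at h
    simp only [mem_coe, mem_filter, mem_range]
    split_ifs <;> omega
  · intro k hk
    simp only [mem_coe, mem_filter, mem_range] at hk
    unfold boundaryWalk
    split_ifs <;>
      simp only [mem_coe, mem_filter, mem_boundaryFPM, or_true, true_or, and_true] <;> omega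
  · rintro ⟨a, b, c⟩ h
    simp only [mem_coe, mem_filter, mem_boundaryFPM] at h
    simp only [boundaryWalk]
    split_ifs <;> simp only [Prod.mk.injEq, true_and] <;> omega
  · intro k hk
    simp only [mem_coe, mem_filter, mem_range] at hk
    simp only [boundaryWalk]
    split_ifs <;> simp_all <;> omega

lemma card_LM_add_three (M : ℕ) : #(LM (M + 3)) = #(LM M) + (M + 3) := by
  rw [LM, LM, card_filter_FPM_add_three _ (fun s => by simp only [shiftTriple_apply]; omega),
    card_LM_boundary]

lemma HM_eq_filter (M : ℕ) : HM M = (FPM M).filter fun s => ¬(s.2.1 + 2 * s.2.2) % 3 = 0 :=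
  (filter_not _ _).symm

lemma card_HM_add_three (M : ℕ) : #(HM (M + 3)) = #(HM M) + 2 * (M + 3) := by
  rw [HM_eq_filter, HM_eq_filter,
    card_filter_FPM_add_three _ (fun s => by simp only [shiftTriple_apply]; omega),
    card_HM_boundary]

lemma six_mul_card_LM : ∀ M : ℕ,
    6 * #(LM M) = M ^ 2 + 3 * M + (if M % 3 = 0 then 0 else 2)
  | 0 | 1 | 2 => by decide
  | M + 3 => by
    rw [card_LM_add_three, Nat.add_mod_right]
    linear_combination six_mul_card_LM M

lemma two_mul_card_LM : ∀ M : ℕ, 2 * #(LM M) = #(HM M)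
  | 0 | 1 | 2 => by decide
  | M + 3 => by
    rw [card_LM_add_three, card_HM_add_three, ← two_mul_card_LM M]
    ring

theorem card_LM_general (M : ℕ) :
    (((LM M).card : ℚ) =
      if M % 3 = 0 then ((M : ℚ)^2 + 3*M) / 6 else ((M : ℚ)^2 + 3*M + 2) / 6)
    ∧ 2 * (LM M).card = (HM M).card := by
  refine ⟨?_, two_mul_card_LM M⟩
  have h : 6 * (#(LM M) : ℚ) = M ^ 2 + 3 * M + (if M % 3 = 0 then 0 else 2) := by
    exact_mod_cast six_mul_card_LM M
  split_ifs at h ⊢ <;> linarith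

/-- counting formula for the weight set `L_M` and `2·|L_M| = |H_M|`. -/
theorem card_LM (M : ℕ) (hM : 1 ≤ M) :
    (((LM M).card : ℚ) =
      if M % 3 = 0 then ((M : ℚ)^2 + 3*M) / 6 else ((M : ℚ)^2 + 3*M + 2) / 6)
    ∧ 2 * (LM M).card = (HM M).card :=
  card_LM_general M
end

section
/- Let M ≥ 1. For every λ ∈ Λ_{Q,M}, every k ∈ {1,2}, and every point s ∈ F_{Q,M}, the C-functions labelled by the Γ-images of λ coincide with the original: Φ_{γ_kλ}(s) = Φ_λ(s). -/
/-!
The cyclic symmetries `γ₁, γ₂` of the Kac coordinates act on weights as affine Weyl group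
elements: `orbit (γ₁ λ)` is a reordering of `orbit λ` translated termwise by `M` times vectors of
the root lattice. On `x = s / M` with `s ∈ F_{Q,M}`, the character `p ↦ exp (2πi/3 ⟨p, x⟩)` is
trivial on `M` times the root lattice, so both sums agree; `γ₂ = γ₁²` follows.
-/

open Finset

noncomputable def orbitExp (x : ℝ × ℝ) (p : ℤ × ℤ) : ℂ :=
  Complex.exp (2 * Real.pi * Complex.I / 3 * ((p.1 : ℂ) * (x.1 : ℂ) + (p.2 : ℂ) * (x.2 : ℂ)))

lemma PhiC_eq_sum_orbitExp (l : ℕ × ℕ × ℕ) (x : ℝ × ℝ) :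
    PhiC l x = ((orbit l).map (orbitExp x)).sum :=
  rfl

lemma orbitExp_add (x : ℝ × ℝ) (p q : ℤ × ℤ) :
    orbitExp x (p + q) = orbitExp x p * orbitExp x q := by
  simp only [orbitExp, ← Complex.exp_add, Prod.fst_add, Prod.snd_add, Int.cast_add]
  ring_nf

/-- In these coordinates the root lattice is `3 ∣ q₁ + q₂`, and `3 ∣ s₁ + 2 s₂` makes `s` pair
integrally with it. -/
lemma orbitExp_pt_smul_eq_one (M : ℕ) {s : ℕ × ℕ × ℕ} (hs : 3 ∣ s.2.1 + 2 * s.2.2)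
    {q : ℤ × ℤ} (hq : 3 ∣ q.1 + q.2) : orbitExp (pt M s) ((M : ℤ) • q) = 1 := by
  rcases eq_or_ne M 0 with rfl | hM
  · simp [orbitExp]
  obtain ⟨n, hn⟩ : (3 : ℤ) ∣ q.1 * s.2.1 + q.2 * s.2.2 := by
    obtain ⟨a, ha⟩ := hs
    obtain ⟨b, hb⟩ := hq
    have ha' : (s.2.1 : ℤ) + 2 * s.2.2 = 3 * a := by exact_mod_cast ha
    exact ⟨q.1 * a - q.1 * s.2.2 + b * s.2.2, by linear_combination q.1 * ha' + (s.2.2 : ℤ) * hb⟩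
  have hnC : (q.1 : ℂ) * s.2.1 + q.2 * s.2.2 = 3 * n := by exact_mod_cast hn
  rw [orbitExp, ← Complex.exp_int_mul_two_pi_mul_I n]
  congr 1
  simp only [pt, Prod.smul_fst, Prod.smul_snd, smul_eq_mul, Int.cast_mul, Int.cast_natCast,
    Complex.ofReal_div, Complex.ofReal_natCast]
  have hMC : (M : ℂ) ≠ 0 := Nat.cast_ne_zero.mpr hM
  field_simp
  linear_combination hnC

lemma orbitExp_pt_add_smul (M : ℕ) {s : ℕ × ℕ × ℕ} (hs : 3 ∣ s.2.1 + 2 * s.2.2)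
    (p : ℤ × ℤ) {q : ℤ × ℤ} (hq : 3 ∣ q.1 + q.2) :
    orbitExp (pt M s) (p + (M : ℤ) • q) = orbitExp (pt M s) p := by
  rw [orbitExp_add, orbitExp_pt_smul_eq_one M hs hq, mul_one]

@[simp]
lemma length_orbit (l : ℕ × ℕ × ℕ) : (orbit l).length = 6 :=
  rfl

/-- `γ₁` acts on weights as an affine Weyl group element: a Weyl group rotation followed by the
translation by `M ω₁`, whose orbit is `orbit (0, 1, 0)`. -/
lemma orbit_gam_one (l : ℕ × ℕ × ℕ) :
    orbit (gam 1 l) = List.zipWith (fun p q => p + ((l.1 + l.2.1 + l.2.2 : ℕ) : ℤ) • q)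
      [(orbit l)[2], (orbit l)[5], (orbit l)[4], (orbit l)[1], (orbit l)[0], (orbit l)[3]]
      (orbit (0, 1, 0)) := by
  obtain ⟨l0, l1, l2⟩ := l
  simp [orbit, gam, Prod.ext_iff]
  and_intros <;> ring

lemma PhiC_gam_one_pt {M : ℕ} {l : ℕ × ℕ × ℕ} (hl : l.1 + l.2.1 + l.2.2 = M) {s : ℕ × ℕ × ℕ}
    (hs : 3 ∣ s.2.1 + 2 * s.2.2) : PhiC (gam 1 l) (pt M s) = PhiC l (pt M s) := by
  rw [PhiC_eq_sum_orbitExp, PhiC_eq_sum_orbitExp, orbit_gam_one, hl]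
  simp only [orbit, List.getElem_cons_succ, List.getElem_cons_zero, List.zipWith_cons_cons,
    List.zipWith_nil_right, List.map_cons, List.map_nil, List.sum_cons, List.sum_nil]
  simp (disch := norm_num) only [orbitExp_pt_add_smul M hs]
  ring

lemma gam_one_sum (l : ℕ × ℕ × ℕ) :
    (gam 1 l).1 + (gam 1 l).2.1 + (gam 1 l).2.2 = l.1 + l.2.1 + l.2.2 := by
  change l.2.2 + l.1 + l.2.1 = _
  omega

theorem C_gamma_invariance_FQM_general (M : ℕ)
    (lam : ℕ × ℕ × ℕ) (hl : lam ∈ FPM M) (k : Fin 3)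
    (s : ℕ × ℕ × ℕ) (hs : s ∈ FQM M) :
    PhiC (gam k lam) (pt M s) = PhiC lam (pt M s) := by
  have hlam : lam.1 + lam.2.1 + lam.2.2 = M := (mem_filter.mp hl).2
  have hs3 : 3 ∣ s.2.1 + 2 * s.2.2 := Nat.dvd_of_mod_eq_zero (mem_filter.mp hs).2
  fin_cases k
  · rfl
  · exact PhiC_gam_one_pt hlam hs3
  · change PhiC (gam 1 (gam 1 lam)) _ = _
    rw [PhiC_gam_one_pt ((gam_one_sum lam).trans hlam) hs3, PhiC_gam_one_pt hlam hs3]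

/-- on points of `F_{Q,M}`, the `C`-functions labelled by the `Γ`-images of
a weight coincide with the original one. -/
theorem C_gamma_invariance_FQM (M : ℕ) (hM : 1 ≤ M)
    (lam : ℕ × ℕ × ℕ) (hl : lam ∈ FPM M) (k : Fin 3) (hk : k = 1 ∨ k = 2)
    (s : ℕ × ℕ × ℕ) (hs : s ∈ FQM M) :
    PhiC (gam k lam) (pt M s) = PhiC lam (pt M s) :=
  C_gamma_invariance_FQM_general M lam hl k s hs
end

section
/- Let M ≥ 1 and λ = (λ0,λ1,λ2) ∈ Λ_{Q,M}. Then the squared modulus of the C-function at the point (1/M, 0) satisfies |Φ_λ(1/M, 0)|² = 4·(2·cos(π(λ1+λ2)/M) + cos(π(λ1−λ2)/M))² + 4·sin²(π(λ1−λ2)/M). -/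
open Finset

/-! On the line `(x, 0)` the six orbit points contribute only through their first coordinates,
which come in three equal pairs, so `Φ_λ(x, 0)` is twice a sum of three unit complex numbers.
Factoring out the phase halfway between the outer two leaves `2 cos u + e^{-iv}` with
`u = π x (λ1 + λ2)` and `v = π x (λ1 - λ2)`, whose squared modulus is `(2 cos u + cos v)² + sin² v`. -/

open Complex Real

theorem norm_sq_two_mul_cos_add_exp_neg_mul_I (u v : ℝ) :
    ‖2 * (Real.cos u : ℂ) + exp (-v * I)‖ ^ 2 = (2 * Real.cos u + Real.cos v) ^ 2 + Real.sin v ^ 2 := by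
  rw [← ofReal_neg, Complex.sq_norm, normSq_apply]
  simp only [add_re, add_im, mul_re, mul_im, re_ofNat, im_ofNat, ofReal_re, ofReal_im,
    exp_ofReal_mul_I_re, exp_ofReal_mul_I_im, Real.cos_neg, Real.sin_neg]
  ring

theorem PhiC_apply_mk_zero (l : ℕ × ℕ × ℕ) (x : ℝ) :
    PhiC l (x, 0) = 2 * exp ((π * x * (l.2.1 - l.2.2) / 3 : ℝ) * I) *
      (2 * Real.cos (π * x * (l.2.1 + l.2.2)) + exp (-(π * x * (l.2.1 - l.2.2) : ℝ) * I)) := by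
  rw [ofReal_cos, Complex.cos, mul_div_cancel₀ _ two_ne_zero]
  simp only [PhiC, orbit, List.map_cons, List.map_nil, List.sum_cons, List.sum_nil, mul_add,
    mul_assoc, ← Complex.exp_add]
  push_cast
  ring_nf

theorem abs_sq_PhiC_at_omega1_general (M : ℕ)
    (lam : ℕ × ℕ × ℕ) :
    ‖PhiC lam ((1 : ℝ) / M, 0)‖ ^ 2 =
      4 * (2 * Real.cos (Real.pi * ((lam.2.1 : ℝ) + lam.2.2) / M) +
             Real.cos (Real.pi * ((lam.2.1 : ℝ) - lam.2.2) / M)) ^ 2 +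
        4 * Real.sin (Real.pi * ((lam.2.1 : ℝ) - lam.2.2) / M) ^ 2 := by
  rw [PhiC_apply_mk_zero, norm_mul, norm_mul, mul_pow, mul_pow, Complex.norm_two,
    norm_exp_ofReal_mul_I, one_pow, mul_one, norm_sq_two_mul_cos_add_exp_neg_mul_I]
  simp only [mul_one_div, div_mul_eq_mul_div]
  ring

/-- the squared modulus of the `C`-function `Φ_λ` at the point `(1/M, 0)`. -/
theorem abs_sq_PhiC_at_omega1 (M : ℕ) (hM : 1 ≤ M)
    (lam : ℕ × ℕ × ℕ) (hl : lam ∈ FPM M) :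
    ‖PhiC lam ((1 : ℝ) / M, 0)‖ ^ 2 =
      4 * (2 * Real.cos (Real.pi * ((lam.2.1 : ℝ) + lam.2.2) / M) +
             Real.cos (Real.pi * ((lam.2.1 : ℝ) - lam.2.2) / M)) ^ 2 +
        4 * Real.sin (Real.pi * ((lam.2.1 : ℝ) - lam.2.2) / M) ^ 2 :=
  abs_sq_PhiC_at_omega1_general M lam
end

section
/- Let M ≥ 1. For every λ ∈ L_M, the C-function does not vanish at the point (1/M, 0): Φ_λ(1/M, 0) ≠ 0. Equivalently, the system 2·cos(π(λ1+λ2)/M) + cos(π(λ1−λ2)/M) = 0 and sin(π(λ1−λ2)/M) = 0 has no solution with (λ0,λ1,λ2) ∈ L_M. -/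
open Finset

open scoped Real

/-! On the `ω₁`-axis the six orbit exponentials factor as
`Φ_λ(t, 0) = 2 e^{iπt(λ₁-λ₂)/3} (2 cos(πt(λ₁+λ₂)) + e^{-iπt(λ₁-λ₂)})`, so `Φ_λ(1/M, 0) = 0` is
exactly the trigonometric system. On `L_M` we have `|λ₁ - λ₂| < M`, so the sine equation forces
`λ₁ = λ₂`; the cosine equation then reads `cos(2πλ₁/M) = -1/2` with `2λ₁ ≤ M`, forcing
`M = 3λ₁`, i.e. `λ₀ = λ₁ = λ₂`, which `L_M` excludes. -/

open Complex in
theorem PhiC_omega1_axis (l : ℕ × ℕ × ℕ) (t : ℝ) :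
    PhiC l (t, 0) = 2 * exp (π * ((l.2.1 : ℝ) - l.2.2) * t / 3 * I) *
      (2 * Real.cos (π * ((l.2.1 : ℝ) + l.2.2) * t) +
        exp (-(π * ((l.2.1 : ℝ) - l.2.2) * t : ℝ) * I)) := by
  rw [ofReal_cos, cos]
  simp only [PhiC, orbit, List.map_cons, List.map_nil, List.sum_cons, List.sum_nil]
  push_cast
  ring_nf
  simp only [← exp_add]
  ring_nf

open Complex in
theorem PhiC_omega1_axis_eq_zero_iff (l : ℕ × ℕ × ℕ) (t : ℝ) :
    PhiC l (t, 0) = 0 ↔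
      2 * Real.cos (π * ((l.2.1 : ℝ) + l.2.2) * t) +
          Real.cos (π * ((l.2.1 : ℝ) - l.2.2) * t) = 0 ∧
        Real.sin (π * ((l.2.1 : ℝ) - l.2.2) * t) = 0 := by
  rw [PhiC_omega1_axis, mul_eq_zero, or_iff_right (mul_ne_zero two_ne_zero (exp_ne_zero _)),
    ← ofReal_neg, exp_mul_I, ← ofReal_cos, ← ofReal_sin, Real.cos_neg, Real.sin_neg,
    Complex.ext_iff]
  simp [-ofReal_cos, -ofReal_sin]

theorem mem_LM {M c a b : ℕ} :
    (c, a, b) ∈ LM M ↔ c + a + b = M ∧ ((a < c ∧ b < c) ∨ (c = a ∧ b < c)) := by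
  simp only [LM, FPM, mem_filter, mem_product, mem_range]
  omega

theorem eq_zero_of_sin_pi_mul_div_eq_zero {x M : ℝ} (hx : |x| < M)
    (h : Real.sin (π * x / M) = 0) : x = 0 := by
  have hM : 0 < M := (abs_nonneg x).trans_lt hx
  obtain ⟨hlo, hhi⟩ := abs_lt.mp hx
  rw [Real.sin_eq_zero_iff_of_lt_of_lt] at h
  · simpa [Real.pi_ne_zero, hM.ne'] using h
  · rw [lt_div_iff₀ hM]; nlinarith [Real.pi_pos]
  · rw [div_lt_iff₀ hM]; nlinarith [Real.pi_pos]

theorem eq_two_thirds_of_cos_pi_mul_eq_neg_half {y : ℝ} (h0 : 0 ≤ y) (h1 : y ≤ 1)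
    (h : Real.cos (π * y) = -1 / 2) : y = 2 / 3 := by
  have hcos : Real.cos (π * y) = Real.cos (π * (2 / 3)) := by
    rw [h, show π * (2 / 3) = π - π / 3 by ring, Real.cos_pi_sub, Real.cos_pi_div_three]
    norm_num
  have := Real.injOn_cos ⟨by positivity, by nlinarith [Real.pi_pos]⟩
    ⟨by positivity, by nlinarith [Real.pi_pos]⟩ hcos
  exact mul_left_cancel₀ Real.pi_ne_zero this

theorem not_trig_system_of_mem_LM {M c a b : ℕ} (hl : (c, a, b) ∈ LM M) :
    ¬ (2 * Real.cos (π * ((a : ℝ) + b) / M) + Real.cos (π * ((a : ℝ) - b) / M) = 0 ∧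
        Real.sin (π * ((a : ℝ) - b) / M) = 0) := by
  rintro ⟨hcos, hsin⟩
  obtain ⟨hsum, horder⟩ := mem_LM.mp hl
  have hab : a = b := by
    have hlt : |(a : ℝ) - b| < M :=
      abs_sub_lt_of_nonneg_of_lt (by positivity) (by exact_mod_cast (show a < M by omega))
        (by positivity) (by exact_mod_cast (show b < M by omega))
    exact_mod_cast sub_eq_zero.mp (eq_zero_of_sin_pi_mul_div_eq_zero hlt hsin)
  subst hab
  have hM : (0 : ℝ) < M := by exact_mod_cast (show 0 < M by omega)
  have h2a : (a + a : ℝ) / M = 2 / 3 := by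
    refine eq_two_thirds_of_cos_pi_mul_eq_neg_half (by positivity) ?_ ?_
    · rw [div_le_one hM]; norm_cast; omega
    · rw [sub_self, mul_zero, zero_div, Real.cos_zero] at hcos
      rw [← mul_div_assoc]; linarith
  rw [div_eq_iff hM.ne'] at h2a
  have : 3 * a = M := by exact_mod_cast (by linarith : (3 * a : ℝ) = M)
  omega

theorem PhiC_at_omega1_ne_zero_general (M : ℕ)
    (lam : ℕ × ℕ × ℕ) (hl : lam ∈ LM M) :
    PhiC lam ((1 : ℝ) / M, 0) ≠ 0
    ∧ ¬ (2 * Real.cos (Real.pi * ((lam.2.1 : ℝ) + lam.2.2) / M) +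
           Real.cos (Real.pi * ((lam.2.1 : ℝ) - lam.2.2) / M) = 0
         ∧ Real.sin (Real.pi * ((lam.2.1 : ℝ) - lam.2.2) / M) = 0) := by
  obtain ⟨c, a, b⟩ := lam
  have htrig := not_trig_system_of_mem_LM hl
  refine ⟨fun h => htrig ?_, htrig⟩
  simpa only [mul_one_div] using (PhiC_omega1_axis_eq_zero_iff (c, a, b) (1 / M)).mp h

/-- the `C`-function `Φ_λ` does not vanish at `(1/M, 0)` for `λ ∈ L_M`;
equivalently, the corresponding trigonometric system has no solution in `L_M`. -/
theorem PhiC_at_omega1_ne_zero (M : ℕ) (hM : 1 ≤ M)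
    (lam : ℕ × ℕ × ℕ) (hl : lam ∈ LM M) :
    PhiC lam ((1 : ℝ) / M, 0) ≠ 0
    ∧ ¬ (2 * Real.cos (Real.pi * ((lam.2.1 : ℝ) + lam.2.2) / M) +
           Real.cos (Real.pi * ((lam.2.1 : ℝ) - lam.2.2) / M) = 0
         ∧ Real.sin (Real.pi * ((lam.2.1 : ℝ) - lam.2.2) / M) = 0) :=
  PhiC_at_omega1_ne_zero_general M lam hl
end

section
/- Let M ≥ 1 and λ = (λ0,λ1,λ2) ∈ Λ_{Q,M}. Then Im(Φ_λ(1/M, 0)) − √3·Re(Φ_λ(1/M, 0)) = −16·cos(π(2λ1+λ2)/(3M) − π/6)·cos(π(λ1−λ2)/(3M) + π/6)·cos(π(λ1+2λ2)/(3M) + π/6). Moreover, for λ ∈ L_M each of these three cosine factors is nonzero, so the left-hand side is nonzero. -/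
open Finset

/-! On the line `x₂ = 0` only the first coordinates of the orbit points matter, and they
coincide in pairs, so `Φ_λ(t, 0) = 2 (e^{iθ₁} + e^{iθ₂} + e^{iθ₃})` with `θ₁ + θ₂ + θ₃ = 0`.
As `Im e^{iθ} - √3 Re e^{iθ} = -2 sin (π/3 - θ)` and the angles `π/3 - θⱼ` add up to `π`,
the identity `sin x + sin y + sin z = 4 cos (x/2) cos (y/2) cos (z/2)` for `x + y + z = π`
gives the product formula. For `λ ∈ L_M` the three cosines are taken at angles in
`(-π/2, π/2)`, hence are positive. -/

open Real

theorem sin_add_sin_add_sin_of_add_eq_pi {x y z : ℝ} (h : x + y + z = π) :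
    sin x + sin y + sin z = 4 * cos (x / 2) * cos (y / 2) * cos (z / 2) := by
  obtain ⟨p, rfl⟩ : ∃ p, x = 2 * p := ⟨x / 2, by ring⟩
  obtain ⟨q, rfl⟩ : ∃ q, y = 2 * q := ⟨y / 2, by ring⟩
  obtain rfl : z = π - 2 * (p + q) := by linarith
  have hz : (π - 2 * (p + q)) / 2 = π / 2 - (p + q) := by ring
  simp only [hz, sin_pi_sub, cos_pi_div_two_sub, mul_div_cancel_left₀ _ (two_ne_zero' ℝ),
    sin_two_mul, sin_add, cos_add]
  linear_combination (-2 * sin q * cos q) * sin_sq_add_cos_sq p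
    + (-2 * sin p * cos p) * sin_sq_add_cos_sq q

theorem Complex.exp_ofReal_mul_I_im_sub_sqrt_three_mul_re (θ : ℝ) :
    (Complex.exp (θ * Complex.I)).im - √3 * (Complex.exp (θ * Complex.I)).re
      = -2 * Real.sin (π / 3 - θ) := by
  rw [Complex.exp_ofReal_mul_I_re, Complex.exp_ofReal_mul_I_im, Real.sin_sub,
    Real.sin_pi_div_three, Real.cos_pi_div_three]
  ring

theorem im_sub_sqrt_three_mul_re_of_add_eq_zero {θ₁ θ₂ θ₃ : ℝ} (h : θ₁ + θ₂ + θ₃ = 0)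
    {z : ℂ} (hz : z = Complex.exp (θ₁ * Complex.I) + Complex.exp (θ₂ * Complex.I)
      + Complex.exp (θ₃ * Complex.I)) :
    z.im - √3 * z.re
      = -8 * cos (θ₁ / 2 - π / 6) * cos (θ₂ / 2 - π / 6) * cos (θ₃ / 2 - π / 6) := by
  have hsum := sin_add_sin_add_sin_of_add_eq_pi
    (show (π / 3 - θ₁) + (π / 3 - θ₂) + (π / 3 - θ₃) = π by linarith)
  have hf (θ : ℝ) : cos ((π / 3 - θ) / 2) = cos (θ / 2 - π / 6) := by
    rw [← cos_neg]; ring_nf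
  simp only [hf] at hsum
  simp only [hz, Complex.add_im, Complex.add_re]
  linear_combination Complex.exp_ofReal_mul_I_im_sub_sqrt_three_mul_re θ₁
    + Complex.exp_ofReal_mul_I_im_sub_sqrt_three_mul_re θ₂
    + Complex.exp_ofReal_mul_I_im_sub_sqrt_three_mul_re θ₃ - 2 * hsum

theorem PhiC_apply_snd_zero (l : ℕ × ℕ × ℕ) (t : ℝ) :
    PhiC l (t, 0) = 2 * (Complex.exp (↑(2 * π / 3 * (2 * l.2.1 + l.2.2) * t) * Complex.I)
      + Complex.exp (↑(2 * π / 3 * (-(l.2.1 : ℝ) + l.2.2) * t) * Complex.I)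
      + Complex.exp (↑(2 * π / 3 * (-(l.2.1 : ℝ) - 2 * l.2.2) * t) * Complex.I)) := by
  simp only [PhiC, orbit, List.map_cons, List.map_nil, List.sum_cons, List.sum_nil]
  push_cast
  ring_nf

theorem PhiC_im_sub_sqrt_three_mul_re_apply_snd_zero (l : ℕ × ℕ × ℕ) (t : ℝ) :
    (PhiC l (t, 0)).im - √3 * (PhiC l (t, 0)).re =
      -16 * cos (π * (2 * (l.2.1 : ℝ) + l.2.2) / 3 * t - π / 6) *
        cos (π * ((l.2.1 : ℝ) - l.2.2) / 3 * t + π / 6) *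
        cos (π * ((l.2.1 : ℝ) + 2 * l.2.2) / 3 * t + π / 6) := by
  have h := im_sub_sqrt_three_mul_re_of_add_eq_zero (by ring) rfl
    (θ₁ := 2 * π / 3 * (2 * l.2.1 + l.2.2) * t) (θ₂ := 2 * π / 3 * (-(l.2.1 : ℝ) + l.2.2) * t)
    (θ₃ := 2 * π / 3 * (-(l.2.1 : ℝ) - 2 * l.2.2) * t)
  have h₁ : cos (2 * π / 3 * (2 * l.2.1 + l.2.2) * t / 2 - π / 6)
      = cos (π * (2 * (l.2.1 : ℝ) + l.2.2) / 3 * t - π / 6) := by ring_nf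
  have h₂ : cos (2 * π / 3 * (-(l.2.1 : ℝ) + l.2.2) * t / 2 - π / 6)
      = cos (π * ((l.2.1 : ℝ) - l.2.2) / 3 * t + π / 6) := by rw [← cos_neg]; ring_nf
  have h₃ : cos (2 * π / 3 * (-(l.2.1 : ℝ) - 2 * l.2.2) * t / 2 - π / 6)
      = cos (π * ((l.2.1 : ℝ) + 2 * l.2.2) / 3 * t + π / 6) := by rw [← cos_neg]; ring_nf
  rw [h₁, h₂, h₃] at h
  rw [PhiC_apply_snd_zero]
  simp only [Complex.mul_re, Complex.mul_im, Complex.re_ofNat, Complex.im_ofNat, zero_mul,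
    sub_zero, add_zero]
  linear_combination 2 * h

theorem cos_pi_mul_div_add_pi_div_six_pos {a N : ℝ} (hN : 0 < N) (ha : -2 * N < a)
    (ha' : a < N) : 0 < cos (π * a / (3 * N) + π / 6) := by
  have h1 : -2 / 3 < a / (3 * N) := by rw [lt_div_iff₀ (by positivity)]; linarith
  have h2 : a / (3 * N) < 1 / 3 := by rw [div_lt_iff₀ (by positivity)]; linarith
  apply cos_pos_of_mem_Ioo
  rw [mul_div_assoc]
  constructor <;> nlinarith [pi_pos]

theorem cos_pi_mul_div_sub_pi_div_six_pos {a N : ℝ} (hN : 0 < N) (ha : -N < a)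
    (ha' : a < 2 * N) : 0 < cos (π * a / (3 * N) - π / 6) := by
  rw [← cos_neg, show -(π * a / (3 * N) - π / 6) = π * -a / (3 * N) + π / 6 by ring]
  exact cos_pi_mul_div_add_pi_div_six_pos hN (by linarith) (by linarith)

theorem PhiC_at_omega1_im_sub_sqrt3_re_general (M : ℕ)
    (lam : ℕ × ℕ × ℕ) :
    ((PhiC lam ((1 : ℝ) / M, 0)).im - Real.sqrt 3 * (PhiC lam ((1 : ℝ) / M, 0)).re =
      -16 * Real.cos (Real.pi * (2 * (lam.2.1 : ℝ) + lam.2.2) / (3 * M) - Real.pi / 6) *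
        Real.cos (Real.pi * ((lam.2.1 : ℝ) - lam.2.2) / (3 * M) + Real.pi / 6) *
        Real.cos (Real.pi * ((lam.2.1 : ℝ) + 2 * lam.2.2) / (3 * M) + Real.pi / 6))
    ∧ (lam ∈ LM M →
        (Real.cos (Real.pi * (2 * (lam.2.1 : ℝ) + lam.2.2) / (3 * M) - Real.pi / 6) ≠ 0
         ∧ Real.cos (Real.pi * ((lam.2.1 : ℝ) - lam.2.2) / (3 * M) + Real.pi / 6) ≠ 0
         ∧ Real.cos (Real.pi * ((lam.2.1 : ℝ) + 2 * lam.2.2) / (3 * M) + Real.pi / 6) ≠ 0)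
        ∧ (PhiC lam ((1 : ℝ) / M, 0)).im - Real.sqrt 3 * (PhiC lam ((1 : ℝ) / M, 0)).re ≠ 0) := by
  have hformula := PhiC_im_sub_sqrt_three_mul_re_apply_snd_zero lam (1 / M)
  simp only [mul_one_div, div_div] at hformula
  refine ⟨hformula, fun hL => ?_⟩
  obtain ⟨hsum, hpos, hlt⟩ : lam.1 + lam.2.1 + lam.2.2 = M ∧ 0 < lam.1 ∧ lam.2.2 < lam.1 := by
    simp only [LM, FPM, Finset.mem_filter] at hL
    omega
  have hsum' : (lam.1 : ℝ) + lam.2.1 + lam.2.2 = M := by exact_mod_cast hsum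
  have hpos' : (0 : ℝ) < lam.1 := by exact_mod_cast hpos
  have hlt' : (lam.2.2 : ℝ) < lam.1 := by exact_mod_cast hlt
  have hlam₁ : (0 : ℝ) ≤ lam.2.1 := Nat.cast_nonneg _
  have hlam₂ : (0 : ℝ) ≤ lam.2.2 := Nat.cast_nonneg _
  have hM : (0 : ℝ) < M := by linarith
  have hcos₁ := cos_pi_mul_div_sub_pi_div_six_pos hM
    (a := 2 * (lam.2.1 : ℝ) + lam.2.2) (by linarith) (by linarith)
  have hcos₂ := cos_pi_mul_div_add_pi_div_six_pos hM
    (a := (lam.2.1 : ℝ) - lam.2.2) (by linarith) (by linarith)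
  have hcos₃ := cos_pi_mul_div_add_pi_div_six_pos hM
    (a := (lam.2.1 : ℝ) + 2 * lam.2.2) (by linarith) (by linarith)
  refine ⟨⟨hcos₁.ne', hcos₂.ne', hcos₃.ne'⟩, ?_⟩
  rw [hformula]
  have := mul_pos (mul_pos hcos₁ hcos₂) hcos₃
  exact ne_of_lt (by linarith)

/-- product formula for `Im Φ_λ(1/M,0) − √3·Re Φ_λ(1/M,0)` and its
nonvanishing for `λ ∈ L_M`. -/
theorem PhiC_at_omega1_im_sub_sqrt3_re (M : ℕ) (hM : 1 ≤ M)
    (lam : ℕ × ℕ × ℕ) (hl : lam ∈ FPM M) :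
    ((PhiC lam ((1 : ℝ) / M, 0)).im - Real.sqrt 3 * (PhiC lam ((1 : ℝ) / M, 0)).re =
      -16 * Real.cos (Real.pi * (2 * (lam.2.1 : ℝ) + lam.2.2) / (3 * M) - Real.pi / 6) *
        Real.cos (Real.pi * ((lam.2.1 : ℝ) - lam.2.2) / (3 * M) + Real.pi / 6) *
        Real.cos (Real.pi * ((lam.2.1 : ℝ) + 2 * lam.2.2) / (3 * M) + Real.pi / 6))
    ∧ (lam ∈ LM M →
        (Real.cos (Real.pi * (2 * (lam.2.1 : ℝ) + lam.2.2) / (3 * M) - Real.pi / 6) ≠ 0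
         ∧ Real.cos (Real.pi * ((lam.2.1 : ℝ) - lam.2.2) / (3 * M) + Real.pi / 6) ≠ 0
         ∧ Real.cos (Real.pi * ((lam.2.1 : ℝ) + 2 * lam.2.2) / (3 * M) + Real.pi / 6) ≠ 0)
        ∧ (PhiC lam ((1 : ℝ) / M, 0)).im - Real.sqrt 3 * (PhiC lam ((1 : ℝ) / M, 0)).re ≠ 0) :=
  PhiC_at_omega1_im_sub_sqrt3_re_general M lam
end

section
/- Let M ≥ 1 and for each λ ∈ L_M define the type II extension coefficients: μ^{±,0}_λ = Re((3+√3·i)·Φ_λ(1/M,0)), μ^{±,1}_λ = 0, μ^{±,2}_λ = Re((3−√3·i)·Φ_λ(1/M,0)) ± 3·|Φ_λ(1/M,0)|. Then for every λ ∈ L_M: (i) the intertwining function β(λ) = 0; (ii) μ^±(λ) = 9·|Φ_λ(1/M,0)|·(2·|Φ_λ(1/M,0)| ± Re((1−√3·i)·Φ_λ(1/M,0))); (iii) μ^+(λ) > 0 and μ^−(λ) > 0. -/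
/-! With `w = (1 - √3 i) z`, `z = Φ_λ(1/M, 0)`, the type II coefficients are real-linear in `z`,
and `β(λ) = 0` and the formulas for `μ^±(λ)` are polynomial identities in `Re z`, `Im z` and `‖z‖`.
As `‖w‖ = 2‖z‖`, positivity of `μ^±(λ)` amounts to `|Re w| < ‖w‖`, that is, to `Im w ≠ 0`.
On the first axis the orbit sum is `z = 2 Σⱼ exp(2πi pⱼ / 3M)` with `p₁ + p₂ + p₃ = 0`. Writing
`2Aⱼ = 2π pⱼ / 3M - π/3` gives `A₁ + A₂ + A₃ = -π/2`, hence
`Im w = 4 Σⱼ sin 2Aⱼ = -16 cos A₁ cos A₂ cos A₃`, and `λ₂ < λ₀` puts every `Aⱼ` in `(-π/2, π/2)`,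
so `Im w < 0`. -/

open Finset

open Real
open Complex (I)

theorem sum_eq_and_lt_of_mem_LM {M : ℕ} {l : ℕ × ℕ × ℕ} (hl : l ∈ LM M) :
    l.1 + l.2.1 + l.2.2 = M ∧ l.2.2 < l.1 := by
  simp only [LM, FPM, mem_filter, mem_product, mem_range] at hl
  omega

theorem muNorm_ofReal_zero (a c : ℝ) : muNorm a 0 c = a ^ 2 + c ^ 2 - a * c := by
  simp [muNorm, ← Complex.ofReal_mul, sq_abs]

theorem betaFun_ofReal_zero (a c a' c' : ℝ) :
    betaFun a 0 c a' 0 c' = ((2 * (a * a' + c * c') - a * c' - c * a' : ℝ) : ℂ) := by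
  simp [betaFun]

section TypeII

variable (z : ℂ)

theorem re_three_add_sqrt_three_mul_I_mul : ((3 + √3 * I) * z).re = 3 * z.re - √3 * z.im := by
  simp [Complex.mul_re]

theorem re_three_sub_sqrt_three_mul_I_mul : ((3 - √3 * I) * z).re = 3 * z.re + √3 * z.im := by
  simp [Complex.mul_re]

theorem re_one_sub_sqrt_three_mul_I_mul : ((1 - √3 * I) * z).re = z.re + √3 * z.im := by
  simp [Complex.mul_re]

theorem betaFun_typeII :
    betaFun (((3 + √3 * I) * z).re : ℂ) 0 ((((3 - √3 * I) * z).re + 3 * ‖z‖ : ℝ) : ℂ)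
      (((3 + √3 * I) * z).re : ℂ) 0 ((((3 - √3 * I) * z).re - 3 * ‖z‖ : ℝ) : ℂ) = 0 := by
  rw [betaFun_ofReal_zero, Complex.ofReal_eq_zero, re_three_add_sqrt_three_mul_I_mul,
    re_three_sub_sqrt_three_mul_I_mul]
  linear_combination 6 * z.im ^ 2 * Real.sq_sqrt zero_le_three
    - 18 * Complex.sq_norm_sub_sq_re z

theorem muNorm_typeII_add :
    muNorm (((3 + √3 * I) * z).re : ℂ) 0 ((((3 - √3 * I) * z).re + 3 * ‖z‖ : ℝ) : ℂ) =
      9 * ‖z‖ * (2 * ‖z‖ + ((1 - √3 * I) * z).re) := by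
  rw [muNorm_ofReal_zero, re_three_add_sqrt_three_mul_I_mul, re_three_sub_sqrt_three_mul_I_mul,
    re_one_sub_sqrt_three_mul_I_mul]
  linear_combination 3 * z.im ^ 2 * Real.sq_sqrt zero_le_three
    - 9 * Complex.sq_norm_sub_sq_re z

theorem muNorm_typeII_sub :
    muNorm (((3 + √3 * I) * z).re : ℂ) 0 ((((3 - √3 * I) * z).re - 3 * ‖z‖ : ℝ) : ℂ) =
      9 * ‖z‖ * (2 * ‖z‖ - ((1 - √3 * I) * z).re) := by
  rw [muNorm_ofReal_zero, re_three_add_sqrt_three_mul_I_mul, re_three_sub_sqrt_three_mul_I_mul,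
    re_one_sub_sqrt_three_mul_I_mul]
  linear_combination 3 * z.im ^ 2 * Real.sq_sqrt zero_le_three
    - 9 * Complex.sq_norm_sub_sq_re z

end TypeII

theorem re_one_sub_sqrt_three_mul_I : (1 - √3 * I).re = 1 := by simp

theorem im_one_sub_sqrt_three_mul_I : (1 - √3 * I).im = -√3 := by simp

theorem norm_one_sub_sqrt_three_mul_I : ‖1 - √3 * I‖ = 2 := by
  rw [Complex.norm_def, Complex.normSq_apply, re_one_sub_sqrt_three_mul_I,
    im_one_sub_sqrt_three_mul_I]
  norm_num

theorem abs_re_one_sub_sqrt_three_mul_lt {z : ℂ} (hz : ((1 - √3 * I) * z).im ≠ 0) :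
    |((1 - √3 * I) * z).re| < 2 * ‖z‖ := by
  simpa [norm_mul, norm_one_sub_sqrt_three_mul_I] using Complex.abs_re_lt_norm.mpr hz

theorem sin_two_mul_add_sin_two_mul_add_sin_two_mul_of_add_eq {A B C : ℝ}
    (h : A + B + C = -(π / 2)) :
    sin (2 * A) + sin (2 * B) + sin (2 * C) = -4 * cos A * cos B * cos C := by
  obtain rfl : C = -(A + B + π / 2) := by linarith
  rw [cos_neg, cos_add_pi_div_two, show 2 * -(A + B + π / 2) = -(2 * (A + B)) - π by ring,
    sin_sub_pi, sin_neg, neg_neg, sin_two_mul, sin_two_mul, sin_two_mul, sin_add, cos_add]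
  linear_combination (-2 * sin A * cos A) * sin_sq_add_cos_sq B
    + (-2 * sin B * cos B) * sin_sq_add_cos_sq A

theorem cos_pi_div_two_mul_div_pos {p q : ℝ} (hq : 0 < q) (hlo : -q < p) (hhi : p < q) :
    0 < cos (π / 2 * (p / q)) := by
  have hlo' : -1 < p / q := by rwa [lt_div_iff₀ hq, neg_one_mul]
  have hhi' : p / q < 1 := (div_lt_one hq).mpr hhi
  apply cos_pos_of_mem_Ioo
  constructor <;> nlinarith [pi_pos]

theorem PhiC_mk_zero (l : ℕ × ℕ × ℕ) (t : ℝ) :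
    PhiC l (t, 0) = 2 * (Complex.exp (↑(2 * π / 3 * (2 * l.2.1 + l.2.2) * t) * I)
      + Complex.exp (↑(2 * π / 3 * (l.2.2 - l.2.1) * t) * I)
      + Complex.exp (↑(2 * π / 3 * (-l.2.1 - 2 * l.2.2) * t) * I)) := by
  simp only [PhiC, orbit, List.map_cons, List.map_nil, List.sum_cons, List.sum_nil]
  push_cast
  ring_nf

theorem im_one_sub_sqrt_three_mul_exp (θ : ℝ) :
    ((1 - √3 * I) * Complex.exp (θ * I)).im = 2 * sin (θ - π / 3) := by
  rw [Complex.mul_im, re_one_sub_sqrt_three_mul_I, im_one_sub_sqrt_three_mul_I,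
    Complex.exp_ofReal_mul_I_re, Complex.exp_ofReal_mul_I_im, sin_sub,
    sin_pi_div_three, cos_pi_div_three]
  ring

theorem im_one_sub_sqrt_three_mul_PhiC_mk_zero (l : ℕ × ℕ × ℕ) (t : ℝ) :
    ((1 - √3 * I) * PhiC l (t, 0)).im =
      4 * (sin (2 * π / 3 * (2 * l.2.1 + l.2.2) * t - π / 3)
        + sin (2 * π / 3 * (l.2.2 - l.2.1) * t - π / 3)
        + sin (2 * π / 3 * (-l.2.1 - 2 * l.2.2) * t - π / 3)) := by
  rw [PhiC_mk_zero, mul_left_comm, Complex.mul_im]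
  simp only [Complex.re_ofNat, Complex.im_ofNat, zero_mul, add_zero, mul_add, Complex.add_im,
    im_one_sub_sqrt_three_mul_exp]
  ring

theorem im_one_sub_sqrt_three_mul_PhiC_neg {M : ℕ} {l : ℕ × ℕ × ℕ}
    (hsum : l.1 + l.2.1 + l.2.2 = M) (hlt : l.2.2 < l.1) :
    ((1 - √3 * I) * PhiC l ((1 : ℝ) / M, 0)).im < 0 := by
  obtain ⟨l0, u, v⟩ := l
  have hsum' : (l0 : ℝ) + u + v = M := by exact_mod_cast hsum
  have hlt' : (v : ℝ) + 1 ≤ l0 := by exact_mod_cast hlt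
  have hu : (0 : ℝ) ≤ u := u.cast_nonneg
  have hv : (0 : ℝ) ≤ v := v.cast_nonneg
  have hM : (0 : ℝ) < 3 * M := by linarith
  have hM₀ : (M : ℝ) ≠ 0 := by linarith
  set A₁ := π / 2 * ((4 * u + 2 * v - M) / (3 * M)) with hA₁
  set A₂ := π / 2 * ((2 * v - 2 * u - M) / (3 * M)) with hA₂
  set A₃ := π / 2 * ((-2 * u - 4 * v - M) / (3 * M)) with hA₃
  have hA : A₁ + A₂ + A₃ = -(π / 2) := by rw [hA₁, hA₂, hA₃]; field_simp; ring
  have h₁ : 2 * π / 3 * (2 * u + v) * (1 / M) - π / 3 = 2 * A₁ := by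
    rw [hA₁]; field_simp; ring
  have h₂ : 2 * π / 3 * (v - u) * (1 / M) - π / 3 = 2 * A₂ := by
    rw [hA₂]; field_simp
  have h₃ : 2 * π / 3 * (-u - 2 * v) * (1 / M) - π / 3 = 2 * A₃ := by
    rw [hA₃]; field_simp; ring
  have hc₁ : 0 < cos A₁ := cos_pi_div_two_mul_div_pos hM (by linarith) (by linarith)
  have hc₂ : 0 < cos A₂ := cos_pi_div_two_mul_div_pos hM (by linarith) (by linarith)
  have hc₃ : 0 < cos A₃ := cos_pi_div_two_mul_div_pos hM (by linarith) (by linarith)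
  rw [im_one_sub_sqrt_three_mul_PhiC_mk_zero]
  simp only [h₁, h₂, h₃, sin_two_mul_add_sin_two_mul_add_sin_two_mul_of_add_eq hA]
  have := mul_pos (mul_pos hc₁ hc₂) hc₃
  linarith

theorem typeII_coefficients_general (M : ℕ)
    (lam : ℕ × ℕ × ℕ) (hl : lam ∈ LM M) :
    let z : ℂ := PhiC lam ((1 : ℝ) / M, 0)
    let a : ℝ := ((3 + Real.sqrt 3 * Complex.I) * z).re
    let cp : ℝ := ((3 - Real.sqrt 3 * Complex.I) * z).re + 3 * ‖z‖
    let cm : ℝ := ((3 - Real.sqrt 3 * Complex.I) * z).re - 3 * ‖z‖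
    betaFun (a : ℂ) 0 (cp : ℂ) (a : ℂ) 0 (cm : ℂ) = 0
    ∧ muNorm (a : ℂ) 0 (cp : ℂ) =
        9 * ‖z‖ * (2 * ‖z‖ + ((1 - Real.sqrt 3 * Complex.I) * z).re)
    ∧ muNorm (a : ℂ) 0 (cm : ℂ) =
        9 * ‖z‖ * (2 * ‖z‖ - ((1 - Real.sqrt 3 * Complex.I) * z).re)
    ∧ 0 < muNorm (a : ℂ) 0 (cp : ℂ)
    ∧ 0 < muNorm (a : ℂ) 0 (cm : ℂ) := by
  intro z a cp cm
  obtain ⟨hsum, hlt⟩ := sum_eq_and_lt_of_mem_LM hl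
  have him := im_one_sub_sqrt_three_mul_PhiC_neg hsum hlt
  obtain ⟨hlo, hhi⟩ := abs_lt.mp (abs_re_one_sub_sqrt_three_mul_lt him.ne)
  have hz : 0 < ‖z‖ := by linarith
  refine ⟨betaFun_typeII z, muNorm_typeII_add z, muNorm_typeII_sub z, ?_, ?_⟩
  · rw [muNorm_typeII_add]
    exact mul_pos (by positivity) (by linarith)
  · rw [muNorm_typeII_sub]
    exact mul_pos (by positivity) (by linarith)

/-- the type II extension coefficients satisfy `β(λ) = 0`, the stated
formula for `μ^±(λ)`, and `μ^±(λ) > 0` for every `λ ∈ L_M`. -/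
theorem typeII_coefficients (M : ℕ) (hM : 1 ≤ M)
    (lam : ℕ × ℕ × ℕ) (hl : lam ∈ LM M) :
    let z : ℂ := PhiC lam ((1 : ℝ) / M, 0)
    let a : ℝ := ((3 + Real.sqrt 3 * Complex.I) * z).re
    let cp : ℝ := ((3 - Real.sqrt 3 * Complex.I) * z).re + 3 * ‖z‖
    let cm : ℝ := ((3 - Real.sqrt 3 * Complex.I) * z).re - 3 * ‖z‖
    betaFun (a : ℂ) 0 (cp : ℂ) (a : ℂ) 0 (cm : ℂ) = 0
    ∧ muNorm (a : ℂ) 0 (cp : ℂ) =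
        9 * ‖z‖ * (2 * ‖z‖ + ((1 - Real.sqrt 3 * Complex.I) * z).re)
    ∧ muNorm (a : ℂ) 0 (cm : ℂ) =
        9 * ‖z‖ * (2 * ‖z‖ - ((1 - Real.sqrt 3 * Complex.I) * z).re)
    ∧ 0 < muNorm (a : ℂ) 0 (cp : ℂ)
    ∧ 0 < muNorm (a : ℂ) 0 (cm : ℂ) :=
  typeII_coefficients_general M lam hl
end

section
/- Let M ≥ 1, λ ∈ Λ_{Q,M}, and s = (s0,s1,s2) ∈ F_{P,M}. If s1+2s2 ≡ 1 (mod 3), then Φ_{γ1λ}(s) = e^{−2πi/3}·Φ_λ(s) and Φ_{γ2λ}(s) = e^{2πi/3}·Φ_λ(s); if s1+2s2 ≡ 2 (mod 3), then Φ_{γ1λ}(s) = e^{2πi/3}·Φ_λ(s) and Φ_{γ2λ}(s) = e^{−2πi/3}·Φ_λ(s). Consequently, for any extension coefficients μ^0, μ^1, μ^2 ∈ ℂ, the extended C-function μ^0 Φ_λ(s) + μ^1 Φ_{γ1λ}(s) + μ^2 Φ_{γ2λ}(s) equals (μ^0 + μ^1 e^{−2πi/3} + μ^2 e^{2πi/3})·Φ_λ(s)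 in the first case and (μ^0 + μ^1 e^{2πi/3} + μ^2 e^{−2πi/3})·Φ_λ(s) in the second case. -/
open Finset

lemma key' (M : ℕ) (hM : 1 ≤ M) (s1 s2 : ℕ) (a b a' b' p q c : ℤ)
    (ha : a' = a + p * M) (hb : b' = b + q * M) (h3 : (3:ℤ) ∣ (p * s1 + q * s2 - c)) :
    Complex.exp (2 * Real.pi * Complex.I / 3 *
        ((a' : ℂ) * (((s1:ℝ)/(M:ℝ) : ℝ) : ℂ) + (b' : ℂ) * (((s2:ℝ)/(M:ℝ) : ℝ) : ℂ)))
    = Complex.exp (2 * Real.pi * Complex.I / 3 * (c:ℂ)) *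
      Complex.exp (2 * Real.pi * Complex.I / 3 *
        ((a : ℂ) * (((s1:ℝ)/(M:ℝ) : ℝ) : ℂ) + (b : ℂ) * (((s2:ℝ)/(M:ℝ) : ℝ) : ℂ))) := by
  obtain ⟨t, ht⟩ := h3
  have hM0 : (M:ℂ) ≠ 0 := by
    simpa using (Nat.cast_ne_zero (R := ℂ)).mpr (by omega : M ≠ 0)
  have harg : (a' : ℂ) * (((s1:ℝ)/(M:ℝ) : ℝ) : ℂ) + (b' : ℂ) * (((s2:ℝ)/(M:ℝ) : ℝ) : ℂ)
      = ((a : ℂ) * (((s1:ℝ)/(M:ℝ) : ℝ) : ℂ) + (b : ℂ) * (((s2:ℝ)/(M:ℝ) : ℝ) : ℂ))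
        + (c:ℂ) + 3 * (t:ℂ) := by
    have ha' : (a' : ℂ) = (a:ℂ) + (p:ℂ) * (M:ℂ) := by exact_mod_cast congrArg (fun z : ℤ => (z : ℂ)) ha
    have hb' : (b' : ℂ) = (b:ℂ) + (q:ℂ) * (M:ℂ) := by exact_mod_cast congrArg (fun z : ℤ => (z : ℂ)) hb
    have ht' : (p:ℂ) * (s1:ℂ) + (q:ℂ) * (s2:ℂ) - (c:ℂ) = 3 * (t:ℂ) := by exact_mod_cast congrArg (fun z : ℤ => (z : ℂ)) ht
    push_cast
    field_simp
    linear_combination ((s1:ℂ) * ha' + (s2:ℂ) * hb' + (M:ℂ) * ht')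
  rw [harg, show 2 * Real.pi * Complex.I / 3 *
      (((a : ℂ) * (((s1:ℝ)/(M:ℝ) : ℝ) : ℂ) + (b : ℂ) * (((s2:ℝ)/(M:ℝ) : ℝ) : ℂ)) + (c:ℂ) + 3 * (t:ℂ))
      = (2 * Real.pi * Complex.I / 3 * (c:ℂ)
        + 2 * Real.pi * Complex.I / 3 *
          ((a : ℂ) * (((s1:ℝ)/(M:ℝ) : ℝ) : ℂ) + (b : ℂ) * (((s2:ℝ)/(M:ℝ) : ℝ) : ℂ)))
        + (t:ℂ) * (2 * Real.pi * Complex.I) from by ring,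
    Complex.exp_add, Complex.exp_add, Complex.exp_int_mul_two_pi_mul_I, mul_one]


lemma phi_g1 (M : ℕ) (hM : 1 ≤ M) (lam : ℕ × ℕ × ℕ)
    (hsum : lam.1 + lam.2.1 + lam.2.2 = M) (s1 s2 : ℕ) (c : ℤ)
    (h : (3:ℤ) ∣ ((s1:ℤ) + 2 * s2 + c)) :
    PhiC (gam 1 lam) ((s1:ℝ)/(M:ℝ), (s2:ℝ)/(M:ℝ))
      = Complex.exp (2 * Real.pi * Complex.I / 3 * (c:ℂ)) *
        PhiC lam ((s1:ℝ)/(M:ℝ), (s2:ℝ)/(M:ℝ)) := by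
  have hg : gam 1 lam = (lam.2.2, lam.1, lam.2.1) := rfl
  rw [hg]
  simp only [PhiC, orbit, List.map_cons, List.map_nil, List.sum_cons, List.sum_nil]
  rw [key' M hM s1 s2 (-(lam.2.1:ℤ)-2*(lam.2.2:ℤ)) ((lam.2.1:ℤ)-(lam.2.2:ℤ)) (2*(lam.1:ℤ)+(lam.2.1:ℤ)) ((lam.1:ℤ)+2*(lam.2.1:ℤ)) (2) (1) c (by omega) (by omega) (by omega)]
  rw [key' M hM s1 s2 (2*(lam.2.1:ℤ)+(lam.2.2:ℤ)) ((lam.2.1:ℤ)-(lam.2.2:ℤ)) (-(lam.1:ℤ)+(lam.2.1:ℤ)) ((lam.1:ℤ)+2*(lam.2.1:ℤ)) (-1) (1) c (by omega) (by omega) (by omega)]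
  rw [key' M hM s1 s2 (-(lam.2.1:ℤ)+(lam.2.2:ℤ)) (-2*(lam.2.1:ℤ)-(lam.2.2:ℤ)) (-(lam.1:ℤ)-2*(lam.2.1:ℤ)) ((lam.1:ℤ)-(lam.2.1:ℤ)) (-1) (1) c (by omega) (by omega) (by omega)]
  rw [key' M hM s1 s2 (-(lam.2.1:ℤ)+(lam.2.2:ℤ)) ((lam.2.1:ℤ)+2*(lam.2.2:ℤ)) (-(lam.1:ℤ)-2*(lam.2.1:ℤ)) (-2*(lam.1:ℤ)-(lam.2.1:ℤ)) (-1) (-2) c (by omega) (by omega) (by omega)]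
  rw [key' M hM s1 s2 (2*(lam.2.1:ℤ)+(lam.2.2:ℤ)) ((lam.2.1:ℤ)+2*(lam.2.2:ℤ)) (-(lam.1:ℤ)+(lam.2.1:ℤ)) (-2*(lam.1:ℤ)-(lam.2.1:ℤ)) (-1) (-2) c (by omega) (by omega) (by omega)]
  rw [key' M hM s1 s2 (-(lam.2.1:ℤ)-2*(lam.2.2:ℤ)) (-2*(lam.2.1:ℤ)-(lam.2.2:ℤ)) (2*(lam.1:ℤ)+(lam.2.1:ℤ)) ((lam.1:ℤ)-(lam.2.1:ℤ)) (2) (1) c (by omega) (by omega) (by omega)]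
  ring


lemma phi_g2 (M : ℕ) (hM : 1 ≤ M) (lam : ℕ × ℕ × ℕ)
    (hsum : lam.1 + lam.2.1 + lam.2.2 = M) (s1 s2 : ℕ) (c : ℤ)
    (h : (3:ℤ) ∣ ((s1:ℤ) + 2 * s2 + (-c))) :
    PhiC (gam 2 lam) ((s1:ℝ)/(M:ℝ), (s2:ℝ)/(M:ℝ))
      = Complex.exp (2 * Real.pi * Complex.I / 3 * (c:ℂ)) *
        PhiC lam ((s1:ℝ)/(M:ℝ), (s2:ℝ)/(M:ℝ)) := by
  have hg : gam 2 lam = (lam.2.1, lam.2.2, lam.1) := rfl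
  rw [hg]
  simp only [PhiC, orbit, List.map_cons, List.map_nil, List.sum_cons, List.sum_nil]
  rw [key' M hM s1 s2 (-(lam.2.1:ℤ)+(lam.2.2:ℤ)) (-2*(lam.2.1:ℤ)-(lam.2.2:ℤ)) (2*(lam.2.2:ℤ)+(lam.1:ℤ)) ((lam.2.2:ℤ)+2*(lam.1:ℤ)) (1) (2) c (by omega) (by omega) (by omega)]
  rw [key' M hM s1 s2 (-(lam.2.1:ℤ)-2*(lam.2.2:ℤ)) (-2*(lam.2.1:ℤ)-(lam.2.2:ℤ)) (-(lam.2.2:ℤ)+(lam.1:ℤ)) ((lam.2.2:ℤ)+2*(lam.1:ℤ)) (1) (2) c (by omega) (by omega) (by omega)]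
  rw [key' M hM s1 s2 (2*(lam.2.1:ℤ)+(lam.2.2:ℤ)) ((lam.2.1:ℤ)+2*(lam.2.2:ℤ)) (-(lam.2.2:ℤ)-2*(lam.1:ℤ)) ((lam.2.2:ℤ)-(lam.1:ℤ)) (-2) (-1) c (by omega) (by omega) (by omega)]
  rw [key' M hM s1 s2 (2*(lam.2.1:ℤ)+(lam.2.2:ℤ)) ((lam.2.1:ℤ)-(lam.2.2:ℤ)) (-(lam.2.2:ℤ)-2*(lam.1:ℤ)) (-2*(lam.2.2:ℤ)-(lam.1:ℤ)) (-2) (-1) c (by omega) (by omega) (by omega)]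
  rw [key' M hM s1 s2 (-(lam.2.1:ℤ)-2*(lam.2.2:ℤ)) ((lam.2.1:ℤ)-(lam.2.2:ℤ)) (-(lam.2.2:ℤ)+(lam.1:ℤ)) (-2*(lam.2.2:ℤ)-(lam.1:ℤ)) (1) (-1) c (by omega) (by omega) (by omega)]
  rw [key' M hM s1 s2 (-(lam.2.1:ℤ)+(lam.2.2:ℤ)) ((lam.2.1:ℤ)+2*(lam.2.2:ℤ)) (2*(lam.2.2:ℤ)+(lam.1:ℤ)) ((lam.2.2:ℤ)-(lam.1:ℤ)) (1) (-1) c (by omega) (by omega) (by omega)]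
  ring


/-- values of `Φ_{γ₁λ}` and `Φ_{γ₂λ}` on points of `F_{P,M}` with
`s1 + 2 s2 ≡ 1, 2 (mod 3)`, and the resulting values of the extended `C`-functions. -/
theorem PhiC_gamma_values (M : ℕ) (hM : 1 ≤ M)
    (lam : ℕ × ℕ × ℕ) (hl : lam ∈ FPM M) (s : ℕ × ℕ × ℕ) (hs : s ∈ FPM M) :
    ((s.2.1 + 2 * s.2.2) % 3 = 1 →
      PhiC (gam 1 lam) (pt M s) = Complex.exp (-(2 * Real.pi * Complex.I / 3)) * PhiC lam (pt M s)
      ∧ PhiC (gam 2 lam) (pt M s) = Complex.exp (2 * Real.pi * Complex.I / 3) * PhiC lam (pt M s)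
      ∧ ∀ μ0 μ1 μ2 : ℂ,
          μ0 * PhiC lam (pt M s) + μ1 * PhiC (gam 1 lam) (pt M s) + μ2 * PhiC (gam 2 lam) (pt M s) =
            (μ0 + μ1 * Complex.exp (-(2 * Real.pi * Complex.I / 3)) +
              μ2 * Complex.exp (2 * Real.pi * Complex.I / 3)) * PhiC lam (pt M s))
    ∧ ((s.2.1 + 2 * s.2.2) % 3 = 2 →
      PhiC (gam 1 lam) (pt M s) = Complex.exp (2 * Real.pi * Complex.I / 3) * PhiC lam (pt M s)
      ∧ PhiC (gam 2 lam) (pt M s) = Complex.exp (-(2 * Real.pi * Complex.I / 3)) * PhiC lam (pt M s)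
      ∧ ∀ μ0 μ1 μ2 : ℂ,
          μ0 * PhiC lam (pt M s) + μ1 * PhiC (gam 1 lam) (pt M s) + μ2 * PhiC (gam 2 lam) (pt M s) =
            (μ0 + μ1 * Complex.exp (2 * Real.pi * Complex.I / 3) +
              μ2 * Complex.exp (-(2 * Real.pi * Complex.I / 3))) * PhiC lam (pt M s)) := by
  have hl' : lam.1 + lam.2.1 + lam.2.2 = M := by
    simp only [FPM, Finset.mem_filter] at hl; exact hl.2
  have hpt : pt M s = ((s.2.1:ℝ)/(M:ℝ), (s.2.2:ℝ)/(M:ℝ)) := rfl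
  have e1 : Complex.exp (2 * Real.pi * Complex.I / 3 * ((1:ℤ):ℂ))
      = Complex.exp (2 * Real.pi * Complex.I / 3) := by norm_num
  have em1 : Complex.exp (2 * Real.pi * Complex.I / 3 * ((-1:ℤ):ℂ))
      = Complex.exp (-(2 * Real.pi * Complex.I / 3)) := by
    congr 1; push_cast; ring
  constructor
  · intro hmod
    have h1 := phi_g1 M hM lam hl' s.2.1 s.2.2 (-1) (by omega)
    have h2 := phi_g2 M hM lam hl' s.2.1 s.2.2 1 (by omega)
    rw [em1] at h1
    rw [e1] at h2
    refine ⟨?_, ?_, ?_⟩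
    · rw [hpt, h1]
    · rw [hpt, h2]
    · intro μ0 μ1 μ2
      rw [hpt, h1, h2]; ring
  · intro hmod
    have h1 := phi_g1 M hM lam hl' s.2.1 s.2.2 1 (by omega)
    have h2 := phi_g2 M hM lam hl' s.2.1 s.2.2 (-1) (by omega)
    rw [e1] at h1
    rw [em1] at h2
    refine ⟨?_, ?_, ?_⟩
    · rw [hpt, h1]
    · rw [hpt, h2]
    · intro μ0 μ1 μ2
      rw [hpt, h1, h2]; ring
end

section
/- Let M ≥ 1, λ ∈ Λ_{Q,M}, and define the type III honeycomb C-functions Ch^{+,III}_λ = Φ_λ + e^{2πi/3}·Φ_{γ1λ} + e^{−2πi/3}·Φ_{γ2λ} and Ch^{−,III}_λ = Φ_λ + e^{−2πi/3}·Φ_{γ1λ} + e^{2πi/3}·Φ_{γ2λ}. Then for every s = (s0,s1,s2) ∈ F_{P,M}: if s1+2s2 ≡ 1 (mod 3) then Ch^{+,III}_λ(s) = 3·Φ_λ(s) and Ch^{−,III}_λ(s) = 0; if s1+2s2 ≡ 2 (mod 3) then Ch^{+,III}_λ(s) = 0 and Ch^{−,III}_λ(s) = 3·Φ_λ(s); and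 if s1+2s2 ≡ 0 (mod 3) then Ch^{+,III}_λ(s) = Ch^{−,III}_λ(s) = 0. -/
open Finset

/-! Write `n = s₁ + 2 s₂` and `ω = e^{2πi/3}`. Since `λ₀ = M - λ₁ - λ₂`, the Weyl orbit of `γ₁λ`
(resp. `γ₂λ`) is the orbit of `λ`, permuted and with each point translated by `M q` for some
`q ≡ (2,1)` (resp. `(1,2)`) mod 3. At the point `s/M` such a translation multiplies the exponential
by `ω^{-n}` (resp. `ω^n`), so `Φ_{γ₁λ}(s) = ω^{-n} Φ_λ(s)` and `Φ_{γ₂λ}(s) = ω^n Φ_λ(s)`. Hence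
`Ch^{±,III}_λ(s) = (1 + x + x⁻¹) Φ_λ(s)` with `x = ω^{1 ∓ n}`, and for a cube root of unity `x`
the factor `1 + x + x⁻¹` is `3` if `x = 1` and `0` otherwise. -/

local notation "ω" => Complex.exp (2 * Real.pi * Complex.I / 3)

lemma isPrimitiveRoot_ω : IsPrimitiveRoot ω 3 := by
  simpa using Complex.isPrimitiveRoot_exp 3 three_ne_zero

lemma zpow_ω_eq_of_modEq {m n : ℤ} (h : m ≡ n [ZMOD 3]) : ω ^ m = ω ^ n := by
  obtain ⟨k, hk⟩ := Int.ModEq.dvd h.symm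
  rw [show m = n + 3 * k by omega, zpow_add₀ (Complex.exp_ne_zero _), zpow_mul, zpow_ofNat,
    isPrimitiveRoot_ω.pow_eq_one, one_zpow, mul_one]

lemma one_add_add_inv_eq_zero {K : Type*} [Field K] {x : K} (h3 : x ^ 3 = 1) (h1 : x ≠ 1) :
    1 + x + x⁻¹ = 0 := by
  have hinv : x⁻¹ = x ^ 2 := inv_eq_of_mul_eq_one_right (by rw [← pow_succ', h3])
  have hfactor : (x - 1) * (1 + x + x ^ 2) = 0 := by linear_combination h3
  rw [hinv]
  exact (mul_eq_zero.mp hfactor).resolve_left (sub_ne_zero.mpr h1)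

lemma one_add_ω_zpow_add_inv (k : ℤ) :
    1 + ω ^ k + (ω ^ k)⁻¹ = if (3 : ℤ) ∣ k then 3 else 0 := by
  split_ifs with hk
  · rw [(isPrimitiveRoot_ω.zpow_eq_one_iff_dvd k).mpr (by exact_mod_cast hk)]
    norm_num
  · refine one_add_add_inv_eq_zero ?_ ?_
    · rw [← zpow_natCast, ← zpow_mul, mul_comm k, zpow_mul, zpow_natCast,
        isPrimitiveRoot_ω.pow_eq_one, one_zpow]
    · rwa [Ne, isPrimitiveRoot_ω.zpow_eq_one_iff_dvd, Nat.cast_ofNat]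

noncomputable def orbitTerm (x : ℝ × ℝ) (p : ℤ × ℤ) : ℂ :=
  Complex.exp (2 * Real.pi * Complex.I / 3 * ((p.1 : ℂ) * (x.1 : ℂ) + (p.2 : ℂ) * (x.2 : ℂ)))

lemma PhiC_eq_sum_orbitTerm (l : ℕ × ℕ × ℕ) (x : ℝ × ℝ) :
    PhiC l x = ((orbit l).map (orbitTerm x)).sum := rfl

lemma orbitTerm_add (x : ℝ × ℝ) (p q : ℤ × ℤ) :
    orbitTerm x (p + q) = orbitTerm x p * orbitTerm x q := by
  rw [orbitTerm, orbitTerm, orbitTerm, ← Complex.exp_add, Prod.fst_add, Prod.snd_add]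
  push_cast
  ring_nf

lemma orbitTerm_pt_smul {M : ℕ} (hM : M ≠ 0) (s : ℕ × ℕ × ℕ) (q : ℤ × ℤ) :
    orbitTerm (pt M s) ((M : ℤ) • q) = ω ^ (q.1 * s.2.1 + q.2 * s.2.2) := by
  rw [orbitTerm, ← Complex.exp_int_mul, pt]
  congr 1
  simp only [Prod.smul_fst, Prod.smul_snd, smul_eq_mul]
  push_cast
  field_simp

lemma orbitTerm_pt_add_smul {M : ℕ} (hM : M ≠ 0) (s : ℕ × ℕ × ℕ) (p q : ℤ × ℤ) {c₁ c₂ : ℤ}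
    (h₁ : q.1 ≡ c₁ [ZMOD 3]) (h₂ : q.2 ≡ c₂ [ZMOD 3]) :
    orbitTerm (pt M s) (p + (M : ℤ) • q) =
      ω ^ (c₁ * s.2.1 + c₂ * s.2.2) * orbitTerm (pt M s) p := by
  rw [orbitTerm_add, orbitTerm_pt_smul hM, mul_comm,
    zpow_ω_eq_of_modEq ((h₁.mul_right _).add (h₂.mul_right _))]

lemma PhiC_gam_one {M : ℕ} (hM : M ≠ 0) {l : ℕ × ℕ × ℕ} (hl : l.1 + l.2.1 + l.2.2 = M)
    (s : ℕ × ℕ × ℕ) :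
    PhiC (gam 1 l) (pt M s) = ω ^ (-(s.2.1 + 2 * s.2.2 : ℤ)) * PhiC l (pt M s) := by
  have shift (p q : ℤ × ℤ) (h₁ : q.1 ≡ 2 [ZMOD 3]) (h₂ : q.2 ≡ 1 [ZMOD 3]) :
      orbitTerm (pt M s) (p + (M : ℤ) • q) =
        ω ^ (-(s.2.1 + 2 * s.2.2 : ℤ)) * orbitTerm (pt M s) p := by
    rw [orbitTerm_pt_add_smul hM s p q h₁ h₂]
    exact congrArg (· * _) (zpow_ω_eq_of_modEq (Int.modEq_iff_dvd.mpr ⟨-s.2.1 - s.2.2, by ring⟩))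
  set a : ℤ := (l.2.1 : ℤ)
  set b : ℤ := (l.2.2 : ℤ)
  have horbit : orbit (gam 1 l) =
      [(-a - 2 * b, a - b) + (M : ℤ) • (2, 1), (2 * a + b, a - b) + (M : ℤ) • (-1, 1),
       (-a + b, -2 * a - b) + (M : ℤ) • (-1, 1), (-a + b, a + 2 * b) + (M : ℤ) • (-1, -2),
       (2 * a + b, a + 2 * b) + (M : ℤ) • (-1, -2),
       (-a - 2 * b, -2 * a - b) + (M : ℤ) • (2, 1)] := by
    rw [show gam 1 l = (l.2.2, l.1, l.2.1) from rfl]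
    simp only [orbit, List.cons.injEq, Prod.ext_iff, Prod.fst_add, Prod.snd_add, Prod.smul_fst,
      Prod.smul_snd, smul_eq_mul, and_true]
    omega
  rw [PhiC_eq_sum_orbitTerm, horbit]
  simp (disch := decide) only [List.map_cons, List.map_nil, List.sum_cons, List.sum_nil, shift]
  rw [PhiC_eq_sum_orbitTerm]
  simp only [orbit, List.map_cons, List.map_nil, List.sum_cons, List.sum_nil]
  ring

lemma PhiC_gam_two {M : ℕ} (hM : M ≠ 0) {l : ℕ × ℕ × ℕ} (hl : l.1 + l.2.1 + l.2.2 = M)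
    (s : ℕ × ℕ × ℕ) :
    PhiC (gam 2 l) (pt M s) = ω ^ (s.2.1 + 2 * s.2.2 : ℤ) * PhiC l (pt M s) := by
  have shift (p q : ℤ × ℤ) (h₁ : q.1 ≡ 1 [ZMOD 3]) (h₂ : q.2 ≡ 2 [ZMOD 3]) :
      orbitTerm (pt M s) (p + (M : ℤ) • q) =
        ω ^ (s.2.1 + 2 * s.2.2 : ℤ) * orbitTerm (pt M s) p := by
    rw [orbitTerm_pt_add_smul hM s p q h₁ h₂, one_mul]
  set a : ℤ := (l.2.1 : ℤ)
  set b : ℤ := (l.2.2 : ℤ)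
  have horbit : orbit (gam 2 l) =
      [(-a + b, -2 * a - b) + (M : ℤ) • (1, 2), (-a - 2 * b, -2 * a - b) + (M : ℤ) • (1, 2),
       (2 * a + b, a + 2 * b) + (M : ℤ) • (-2, -1), (2 * a + b, a - b) + (M : ℤ) • (-2, -1),
       (-a - 2 * b, a - b) + (M : ℤ) • (1, -1), (-a + b, a + 2 * b) + (M : ℤ) • (1, -1)] := by
    rw [show gam 2 l = (l.2.1, l.2.2, l.1) from rfl]
    simp only [orbit, List.cons.injEq, Prod.ext_iff, Prod.fst_add, Prod.snd_add, Prod.smul_fst,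
      Prod.smul_snd, smul_eq_mul, and_true]
    omega
  rw [PhiC_eq_sum_orbitTerm, horbit]
  simp (disch := decide) only [List.map_cons, List.map_nil, List.sum_cons, List.sum_nil, shift]
  rw [PhiC_eq_sum_orbitTerm]
  simp only [orbit, List.map_cons, List.map_nil, List.sum_cons, List.sum_nil]
  ring

theorem typeIII_honeycomb_C_values_general (M : ℕ) (hM : 1 ≤ M)
    (lam : ℕ × ℕ × ℕ) (hl : lam ∈ FPM M) (s : ℕ × ℕ × ℕ) :
    let w : ℂ := Complex.exp (2 * Real.pi * Complex.I / 3)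
    let winv : ℂ := Complex.exp (-(2 * Real.pi * Complex.I / 3))
    let ChP : ℂ := PhiC lam (pt M s) + w * PhiC (gam 1 lam) (pt M s) + winv * PhiC (gam 2 lam) (pt M s)
    let ChM : ℂ := PhiC lam (pt M s) + winv * PhiC (gam 1 lam) (pt M s) + w * PhiC (gam 2 lam) (pt M s)
    ((s.2.1 + 2 * s.2.2) % 3 = 1 → ChP = 3 * PhiC lam (pt M s) ∧ ChM = 0)
    ∧ ((s.2.1 + 2 * s.2.2) % 3 = 2 → ChP = 0 ∧ ChM = 3 * PhiC lam (pt M s))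
    ∧ ((s.2.1 + 2 * s.2.2) % 3 = 0 → ChP = 0 ∧ ChM = 0) := by
  intro w winv ChP ChM
  have hM₀ : M ≠ 0 := by omega
  have hsum : lam.1 + lam.2.1 + lam.2.2 = M := (Finset.mem_filter.mp hl).2
  set n : ℤ := s.2.1 + 2 * s.2.2 with hn
  have hω : ω ≠ 0 := Complex.exp_ne_zero _
  have hChP : ChP = (1 + ω ^ (1 - n) + (ω ^ (1 - n))⁻¹) * PhiC lam (pt M s) := by
    simp only [ChP, w, winv, Complex.exp_neg, PhiC_gam_one hM₀ hsum, PhiC_gam_two hM₀ hsum, ← hn,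
      zpow_sub₀ hω, zpow_neg, zpow_one, inv_div]
    ring
  have hChM : ChM = (1 + ω ^ (1 + n) + (ω ^ (1 + n))⁻¹) * PhiC lam (pt M s) := by
    simp only [ChM, w, winv, Complex.exp_neg, PhiC_gam_one hM₀ hsum, PhiC_gam_two hM₀ hsum, ← hn,
      zpow_add₀ hω, zpow_neg, zpow_one, mul_inv]
    ring
  rw [hChP, hChM, one_add_ω_zpow_add_inv, one_add_ω_zpow_add_inv]
  refine ⟨fun h => ?_, fun h => ?_, fun h => ?_⟩ <;>
    simp only [show ((3 : ℤ) ∣ 1 - n) ↔ (s.2.1 + 2 * s.2.2) % 3 = 1 by omega,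
      show ((3 : ℤ) ∣ 1 + n) ↔ (s.2.1 + 2 * s.2.2) % 3 = 2 by omega, h] <;> norm_num

/-- values of the type III honeycomb `C`-functions `Ch^{±,III}_λ` on the
points of `F_{P,M}`, according to the residue of `s1 + 2 s2` mod `3`. -/
theorem typeIII_honeycomb_C_values (M : ℕ) (hM : 1 ≤ M)
    (lam : ℕ × ℕ × ℕ) (hl : lam ∈ FPM M) (s : ℕ × ℕ × ℕ) (hs : s ∈ FPM M) :
    let w : ℂ := Complex.exp (2 * Real.pi * Complex.I / 3)
    let winv : ℂ := Complex.exp (-(2 * Real.pi * Complex.I / 3))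
    let ChP : ℂ := PhiC lam (pt M s) + w * PhiC (gam 1 lam) (pt M s) + winv * PhiC (gam 2 lam) (pt M s)
    let ChM : ℂ := PhiC lam (pt M s) + winv * PhiC (gam 1 lam) (pt M s) + w * PhiC (gam 2 lam) (pt M s)
    ((s.2.1 + 2 * s.2.2) % 3 = 1 → ChP = 3 * PhiC lam (pt M s) ∧ ChM = 0)
    ∧ ((s.2.1 + 2 * s.2.2) % 3 = 2 → ChP = 0 ∧ ChM = 3 * PhiC lam (pt M s))
    ∧ ((s.2.1 + 2 * s.2.2) % 3 = 0 → ChP = 0 ∧ ChM = 0) :=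
  typeIII_honeycomb_C_values_general M hM lam hl s
end
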